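/- If a shift-invariant Markov random field μ satisfies weak spatial mixing (with some vanishing rate f), then μ is measure-theoretically strong mixing: for all finite disjoint U, V ⊆ Z^d, u ∈ A^U, v ∈ A^V, μ([u] ∩ σ_{-p}([v])) → μ(u)μ(v) as ||p|| → ∞. -/

import Mathlib

open MeasureTheory

abbrev Site (d : ℕ) := Fin d → ℤ

def dist1 {d : ℕ} (p q : Site d) : ℕ := ∑ i, (p i - q i).natAbs

/-- Outer boundary of a set of sites. -/
def bd {d : ℕ} (S : Set (Site d)) : Set (Site d) :=
  {p | p ∉ S ∧ ∃ q ∈ S, dist1 p q = 1}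

/-- Cylinder set: points agreeing with `u` on `S`. -/
def cyl {d : ℕ} {A : Type*} (S : Set (Site d)) (u : Site d → A) : Set (Site d → A) :=
  {x | ∀ p ∈ S, x p = u p}

noncomputable def condR {d : ℕ} {A : Type*} [MeasurableSpace A]
    (μ : Measure (Site d → A)) (E B : Set (Site d → A)) : ℝ :=
  (μ (E ∩ B) / μ B).toReal

def ShiftInvariant {d : ℕ} {A : Type*} [MeasurableSpace A]
    (μ : Measure (Site d → A)) : Prop :=
  ∀ (t : Site d) (E : Set (Site d → A)),
    μ ((fun (x : Site d → A) (q : Site d) => x (q + t)) ⁻¹' E) = μ E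

/-- Markov random field property. -/
def IsMRF {d : ℕ} {A : Type*} [MeasurableSpace A] (μ : Measure (Site d → A)) : Prop :=
  ∀ S : Set (Site d), S.Finite → ∀ u : Site d → A,
    ∀ T : Set (Site d), T.Finite → bd S ⊆ T → Disjoint S T →
    ∀ δ : Site d → A, 0 < μ (cyl T δ) →
      condR μ (cyl S u) (cyl T δ) = condR μ (cyl S u) (cyl (bd S) δ)

/-- The support of `μ`: points all of whose cylinder sets have positive measure. -/
def mrfSupport {d : ℕ} {A : Type*} [MeasurableSpace A]
    (μ : Measure (Site d → A)) : Set (Site d → A) :=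
  {x | ∀ S : Set (Site d), S.Finite → 0 < μ (cyl S x)}

def TSSM {d : ℕ} {A : Type*} (X : Set (Site d → A)) (g : ℕ) : Prop :=
  ∀ U S V : Set (Site d), U.Finite → S.Finite → V.Finite →
    Disjoint U S → Disjoint S V → Disjoint U V →
    (∀ p ∈ U, ∀ q ∈ V, g ≤ dist1 p q) →
    ∀ u s v : Site d → A,
      (∃ x ∈ X, (∀ p ∈ U, x p = u p) ∧ (∀ p ∈ S, x p = s p)) →
      (∃ x ∈ X, (∀ p ∈ S, x p = s p) ∧ (∀ p ∈ V, x p = v p)) →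
      ∃ x ∈ X, (∀ p ∈ U, x p = u p) ∧ (∀ p ∈ S, x p = s p) ∧ ∀ p ∈ V, x p = v p

noncomputable def setD {d : ℕ} (U V : Set (Site d)) : ℕ :=
  sInf {n : ℕ | ∃ p ∈ U, ∃ q ∈ V, dist1 p q = n}

/-- Weak spatial mixing with rate `f`. -/
def WSM {d : ℕ} {A : Type*} [MeasurableSpace A]
    (μ : Measure (Site d → A)) (f : ℕ → ℝ) : Prop :=
  ∀ W : Set (Site d), W.Finite → ∀ U : Set (Site d), U ⊆ W → ∀ u : Site d → A,
    ∀ δ₁ δ₂ : Site d → A, 0 < μ (cyl (bd W) δ₁) → 0 < μ (cyl (bd W) δ₂) →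
      |condR μ (cyl U u) (cyl (bd W) δ₁) - condR μ (cyl U u) (cyl (bd W) δ₂)| ≤
        (U.ncard : ℝ) * f (setD U (bd W))


/-!
Put the support `U` of `u` inside a ball `W` and shift `v` beyond `W ∪ ∂W`. Splitting according
to the configuration `δ` on `∂W`, the Markov property makes `[u]` and the shifted `[v]`
conditionally independent given `δ`, so
`μ([u] ∩ σ_{-t}[v]) = ∑_δ μ(u | δ) μ(δ ∩ σ_{-t}[v])` while `μ(u) = ∑_δ μ(u | δ) μ(δ)`.
Weak spatial mixing puts all the `μ(u | δ)` within `|U| f(dist(U, ∂W))` of each other, hence of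
`μ(u)`, and this distance grows with the radius of `W`.

The σ-algebra on `A` is arbitrary, so cylinder sets need not be measurable and `μ` only acts on
them as an outer measure. The splitting is therefore done over the measurable atoms of `A`: a
measure cannot distinguish configurations that agree atom by atom.
-/

section MeasurableAtom

variable {ι : Type*} {α : ι → Type*} [∀ i, MeasurableSpace (α i)]

theorem MeasurableSet.mem_of_measurableAtom_eq {s : Set (∀ i, α i)} (hs : MeasurableSet s)
    {x y : ∀ i, α i} (hx : x ∈ s) (hxy : ∀ i, measurableAtom (x i) = measurableAtom (y i)) :
    y ∈ s := by
  rw [MeasurableSpace.pi, MeasurableSpace.measurableSet_iSup] at hs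
  induction hs generalizing x y with
  | basic s hs =>
    obtain ⟨i, B, hB, rfl⟩ := hs
    exact measurableAtom_subset hB hx (hxy i ▸ mem_measurableAtom_self (y i))
  | empty => exact hx
  | compl s _ ih => exact fun hy => hx (ih hy fun i => (hxy i).symm)
  | iUnion s _ ih =>
    obtain ⟨n, hn⟩ := Set.mem_iUnion.mp hx
    exact Set.mem_iUnion.mpr ⟨n, ih n hn hxy⟩

theorem measure_mono_of_measurableAtom_eq (μ : Measure (∀ i, α i)) {E E' : Set (∀ i, α i)}
    (h : ∀ x ∈ E, ∃ y ∈ E', ∀ i, measurableAtom (x i) = measurableAtom (y i)) :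
    μ E ≤ μ E' := by
  calc μ E ≤ μ (toMeasurable μ E') := measure_mono fun x hx => by
        obtain ⟨y, hy, hxy⟩ := h x hx
        exact (measurableSet_toMeasurable μ E').mem_of_measurableAtom_eq
          (subset_toMeasurable μ E' hy) fun i => (hxy i).symm
    _ = μ E' := measure_toMeasurable E'

end MeasurableAtom

theorem measure_eq_sum_inter_fiber {X ι : Type*} [MeasurableSpace X] [Fintype ι] (μ : Measure X)
    {π : X → ι} (hπ : ∀ i, MeasurableSet (π ⁻¹' {i})) (E : Set X) :
    μ E = ∑ i, μ (E ∩ π ⁻¹' {i}) := by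
  have h := congrArg (· E) (μ.restrict_iUnion (pairwise_disjoint_fiber π) hπ)
  simp only [← Set.preimage_iUnion, Set.iUnion_of_singleton, Set.preimage_univ,
    Measure.restrict_univ, Measure.sum_fintype, Measure.finsetSum_apply] at h
  rw [h]
  exact Finset.sum_congr rfl fun i _ => Measure.restrict_apply' (hπ i)

abbrev Atom (A : Type*) [MeasurableSpace A] := Quotient (Setoid.ker (measurableAtom : A → Set A))

namespace Atom

variable {A : Type*} [MeasurableSpace A]

def mk (a : A) : Atom A := Quotient.mk _ a

theorem mk_eq_mk {a b : A} : mk a = mk b ↔ measurableAtom a = measurableAtom b := Quotient.eq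

@[simp] theorem mk_out (q : Atom A) : mk q.out = q := Quotient.out_eq q

theorem measurableSet_mk_preimage [Countable A] (q : Atom A) : MeasurableSet (mk ⁻¹' {q}) := by
  have : mk ⁻¹' {q} = measurableAtom q.out := by
    ext a
    rw [Set.mem_preimage, Set.mem_singleton_iff]
    conv_lhs => rw [← mk_out q, mk_eq_mk]
    exact ⟨fun h => h ▸ mem_measurableAtom_self a, measurableAtom_eq_of_mem⟩
  rw [this]
  exact .measurableAtom_of_countable _

end Atom

section Cylinders

open scoped Classical

variable {d : ℕ} {A : Type*}

theorem cyl_empty (g : Site d → A) : cyl ∅ g = Set.univ := by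
  simp [cyl]

theorem cyl_congr {S : Set (Site d)} {g h : Site d → A} (hgh : ∀ p ∈ S, g p = h p) :
    cyl S g = cyl S h := by
  ext x
  exact forall₂_congr fun p hp => by rw [hgh p hp]

theorem cyl_union {S T : Set (Site d)} (hST : Disjoint S T) (g h : Site d → A) :
    cyl (S ∪ T) (S.piecewise g h) = cyl S g ∩ cyl T h := by
  ext x
  simp only [cyl, Set.mem_union, Set.mem_inter_iff, Set.mem_ofPred_eq]
  constructor
  · intro hx
    exact ⟨fun p hp => by simpa [hp] using hx p (.inl hp),
      fun p hp => by simpa [hST.notMem_of_mem_right hp] using hx p (.inr hp)⟩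
  · rintro ⟨hS, hT⟩ p (hp | hp)
    · simpa [hp] using hS p hp
    · simpa [hST.notMem_of_mem_right hp] using hT p hp

theorem setOf_forall_add_eq_cyl (V : Set (Site d)) (v : Site d → A) (t : Site d) :
    {x : Site d → A | ∀ q ∈ V, x (q + t) = v q} = cyl ((· + t) '' V) (fun p => v (p - t)) := by
  ext x
  constructor
  · rintro hx _ ⟨q, hq, rfl⟩
    simpa using hx q hq
  · intro hx q hq
    simpa using hx (q + t) ⟨q, hq, rfl⟩

variable [MeasurableSpace A]

theorem ShiftInvariant.measure_cyl_image_add {μ : Measure (Site d → A)} (hinv : ShiftInvariant μ)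
    (V : Set (Site d)) (v : Site d → A) (t : Site d) :
    μ (cyl ((· + t) '' V) (fun p => v (p - t))) = μ (cyl V v) := by
  rw [← setOf_forall_add_eq_cyl]
  exact hinv t (cyl V v)

def restrictAtoms (F : Finset (Site d)) (x : Site d → A) : F → Atom A :=
  fun p => Atom.mk (x p)

theorem measurableSet_restrictAtoms_preimage [Countable A] (F : Finset (Site d))
    (ρ : F → Atom A) : MeasurableSet (restrictAtoms F ⁻¹' {ρ}) := by
  have : restrictAtoms F ⁻¹' {ρ} =
      ⋂ p : F, (fun x : Site d → A => x p) ⁻¹' (Atom.mk ⁻¹' {ρ p}) := by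
    ext x
    simp [restrictAtoms, funext_iff]
  rw [this]
  exact .iInter fun p => measurable_pi_apply _ (Atom.measurableSet_mk_preimage _)

variable [Nonempty A]

noncomputable def repPattern {F : Finset (Site d)} (ρ : F → Atom A) : Site d → A :=
  fun p => if h : p ∈ F then (ρ ⟨p, h⟩).out else Classical.arbitrary A

@[simp] theorem restrictAtoms_repPattern {F : Finset (Site d)} (ρ : F → Atom A) :
    restrictAtoms F (repPattern ρ) = ρ :=
  funext fun p => by simp [restrictAtoms, repPattern]

end Cylinders

section Decomposition

open scoped Classical

variable {d : ℕ} {A : Type*} [MeasurableSpace A]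

theorem measurableAtom_eq_of_restrictAtoms_eq {F : Finset (Site d)} {x y : Site d → A}
    (h : restrictAtoms F x = restrictAtoms F y) {p : Site d} (hp : p ∈ F) :
    measurableAtom (x p) = measurableAtom (y p) :=
  Atom.mk_eq_mk.mp (congrFun h ⟨p, hp⟩)

theorem measure_cyl_inter_cyl_inter_fiber (μ : Measure (Site d → A)) {U T : Set (Site d)}
    {F : Finset (Site d)} (hUF : U ⊆ F) (hFT : Disjoint (↑F) T) {u g δ : Site d → A}
    (hug : ∀ p ∈ U, measurableAtom (u p) = measurableAtom (g p)) :
    μ (cyl U u ∩ cyl T δ ∩ restrictAtoms F ⁻¹' {restrictAtoms F g}) = μ (cyl (↑F) g ∩ cyl T δ) := by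
  have hUT : ∀ p ∈ T, p ∉ U := fun p hp hU => hFT.notMem_of_mem_right hp (hUF hU)
  apply le_antisymm <;> apply measure_mono_of_measurableAtom_eq
  · rintro x ⟨⟨-, hxT⟩, hxg⟩
    refine ⟨(↑F : Set (Site d)).piecewise g x,
      ⟨fun p hp => Set.piecewise_eq_of_mem _ _ _ hp, fun p hp => ?_⟩, fun p => ?_⟩
    · rw [Set.piecewise_eq_of_notMem _ _ _ (hFT.notMem_of_mem_right hp)]
      exact hxT p hp
    · by_cases hp : p ∈ (F : Set (Site d))
      · rw [Set.piecewise_eq_of_mem _ _ _ hp]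
        exact measurableAtom_eq_of_restrictAtoms_eq hxg hp
      · rw [Set.piecewise_eq_of_notMem _ _ _ hp]
  · rintro x ⟨hxg, hxT⟩
    refine ⟨U.piecewise u x, ⟨⟨fun p hp => Set.piecewise_eq_of_mem _ _ _ hp, fun p hp => ?_⟩,
      funext fun q => Atom.mk_eq_mk.mpr ?_⟩, fun p => ?_⟩
    · rw [Set.piecewise_eq_of_notMem _ _ _ (hUT p hp)]
      exact hxT p hp
    · by_cases hq : (q : Site d) ∈ U
      · rw [Set.piecewise_eq_of_mem _ _ _ hq]
        exact hug q hq
      · rw [Set.piecewise_eq_of_notMem _ _ _ hq, hxg q q.2]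
    · by_cases hp : p ∈ U
      · rw [Set.piecewise_eq_of_mem _ _ _ hp, hxg p (hUF hp), hug p hp]
      · rw [Set.piecewise_eq_of_notMem _ _ _ hp]

variable [Fintype A] [Nonempty A]

theorem measure_cyl_inter_cyl_eq_sum (μ : Measure (Site d → A)) {U T : Set (Site d)}
    {F : Finset (Site d)} (hUF : U ⊆ F) (hFT : Disjoint (↑F) T) (u δ : Site d → A) :
    μ (cyl U u ∩ cyl T δ) = ∑ ρ : F → Atom A with
      ∀ p ∈ U, measurableAtom (u p) = measurableAtom (repPattern ρ p),
      μ (cyl (↑F) (repPattern ρ) ∩ cyl T δ) := by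
  rw [measure_eq_sum_inter_fiber μ (measurableSet_restrictAtoms_preimage F), Finset.sum_filter]
  refine Finset.sum_congr rfl fun ρ _ => ?_
  conv_lhs => rw [← restrictAtoms_repPattern ρ]
  split_ifs with hρ
  · exact measure_cyl_inter_cyl_inter_fiber μ hUF hFT hρ
  · obtain ⟨p, hp, hne⟩ := not_forall₂.mp hρ
    refine measure_mono_null ?_ measure_empty
    rintro x ⟨⟨hxU, -⟩, hxg⟩
    exact hne (hxU p hp ▸ measurableAtom_eq_of_restrictAtoms_eq hxg (hUF hp))

theorem measure_cyl_eq_sum (μ : Measure (Site d → A)) {T : Set (Site d)} {F : Finset (Site d)}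
    (hFT : Disjoint (↑F) T) (δ : Site d → A) :
    μ (cyl T δ) = ∑ ρ : F → Atom A, μ (cyl (↑F) (repPattern ρ) ∩ cyl T δ) := by
  simpa [cyl_empty] using measure_cyl_inter_cyl_eq_sum μ (Set.empty_subset _) hFT δ δ

end Decomposition

section Geometry

variable {d : ℕ}

theorem dist1_comm (p q : Site d) : dist1 p q = dist1 q p :=
  Finset.sum_congr rfl fun i _ => by omega

theorem dist1_triangle (p q r : Site d) : dist1 p r ≤ dist1 p q + dist1 q r := by
  simp only [dist1, ← Finset.sum_add_distrib]
  exact Finset.sum_le_sum fun i _ => by omega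

theorem dist1_add_left (p q : Site d) : dist1 (p + q) q = dist1 p 0 :=
  Finset.sum_congr rfl fun i _ => by simp

theorem dist1_zero_le_add (q t : Site d) : dist1 t 0 ≤ dist1 (q + t) 0 + dist1 q 0 := by
  have := dist1_triangle t (q + t) 0
  rw [dist1_comm t (q + t), dist1_add_left] at this
  omega

theorem dist1_single_zero [NeZero d] (i : Fin d) (z : ℤ) : dist1 (Pi.single i z) 0 = z.natAbs := by
  rw [dist1, Finset.sum_eq_single i (fun j _ hj => by simp [hj]) (by simp)]
  simp

theorem finite_setOf_dist1_le (q : Site d) (r : ℕ) : {p : Site d | dist1 p q ≤ r}.Finite := by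
  refine (Set.Finite.pi fun i => Set.finite_Icc (q i - r) (q i + r)).subset fun p hp i _ => ?_
  have : (p i - q i).natAbs ≤ dist1 p q :=
    Finset.single_le_sum (f := fun j => (p j - q j).natAbs) (fun _ _ => Nat.zero_le _)
      (Finset.mem_univ i)
  simp only [Set.mem_ofPred_eq] at hp
  simp only [Set.mem_Icc]
  omega

theorem Set.Finite.bd {W : Set (Site d)} (hW : W.Finite) : (bd W).Finite :=
  (hW.biUnion fun q _ => finite_setOf_dist1_le q 1).subset fun _ ⟨_, _, hq, hpq⟩ =>
    Set.mem_biUnion hq hpq.le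

theorem dist1_of_mem_bd_ball {n : ℕ} {p : Site d} (hp : p ∈ bd {p | dist1 p 0 ≤ n}) :
    dist1 p 0 = n + 1 := by
  obtain ⟨hpn, q, hq, hpq⟩ := hp
  have := dist1_triangle p q 0
  simp only [Set.mem_ofPred_eq] at hpn hq
  omega

theorem bd_ball_nonempty (hd : 0 < d) (n : ℕ) : (bd {p : Site d | dist1 p 0 ≤ n}).Nonempty := by
  have : NeZero d := ⟨hd.ne'⟩
  refine ⟨Pi.single 0 (n + 1 : ℤ), ?_, Pi.single 0 (n : ℤ), ?_, ?_⟩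
  · simp only [Set.mem_ofPred_eq, dist1_single_zero]
    omega
  · simp only [Set.mem_ofPred_eq, dist1_single_zero]
    omega
  · rw [dist1, Finset.sum_eq_single 0 (fun j _ hj => by simp [hj]) (by simp)]
    simp

theorem le_dist1_of_mem_bd_ball {M R : ℕ} {p q : Site d} (hp : dist1 p 0 ≤ R)
    (hq : q ∈ bd {p | dist1 p 0 ≤ M + R}) : M ≤ dist1 p q := by
  have := dist1_triangle q p 0
  have := dist1_of_mem_bd_ball hq
  have := dist1_comm q p
  omega

theorem disjoint_ball_union_bd_image_add {V : Set (Site d)} {n R : ℕ} {t : Site d}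
    (hV : ∀ q ∈ V, dist1 q 0 ≤ R) (ht : n + R + 2 ≤ dist1 t 0) :
    Disjoint ({p | dist1 p 0 ≤ n} ∪ bd {p | dist1 p 0 ≤ n}) ((· + t) '' V) := by
  refine Set.disjoint_left.mpr fun p hp ⟨q, hq, hqp⟩ => ?_
  have hfar : n + 2 ≤ dist1 p 0 := by
    have := dist1_zero_le_add q t
    have := hV q hq
    simp only [← hqp]
    omega
  rcases hp with hp | hp
  · exact absurd hp (by simp only [Set.mem_ofPred_eq]; omega)
  · have := dist1_of_mem_bd_ball hp
    omega

theorem le_setD {U V : Set (Site d)} {m : ℕ} (hU : U.Nonempty) (hV : V.Nonempty)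
    (h : ∀ p ∈ U, ∀ q ∈ V, m ≤ dist1 p q) : m ≤ setD U V := by
  obtain ⟨p, hp⟩ := hU
  obtain ⟨q, hq⟩ := hV
  exact le_csInf ⟨_, p, hp, q, hq, rfl⟩ fun _ ⟨p, hp, q, hq, h'⟩ => h' ▸ h p hp q hq

end Geometry

section Markov

open scoped Classical

variable {d : ℕ} {A : Type*} [MeasurableSpace A]

theorem condR_mul (μ : Measure (Site d → A)) [IsFiniteMeasure μ] (E B : Set (Site d → A)) :
    condR μ E B * (μ B).toReal = (μ (E ∩ B)).toReal := by
  rw [condR, ENNReal.toReal_div]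
  rcases eq_or_ne (μ B).toReal 0 with hB | hB
  · rw [hB, mul_zero, eq_comm, ENNReal.toReal_eq_zero_iff]
    exact .inl (measure_mono_null Set.inter_subset_right
      ((ENNReal.toReal_eq_zero_iff _).mp hB |>.resolve_right (measure_ne_top μ B)))
  · exact div_mul_cancel₀ _ hB

theorem disjoint_bd (S : Set (Site d)) : Disjoint S (bd S) :=
  Set.disjoint_left.mpr fun _ hp hb => hb.1 hp

variable [Fintype A] [Nonempty A]

theorem condR_cyl_eq_sum (μ : Measure (Site d → A)) [IsFiniteMeasure μ] {U T : Set (Site d)}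
    {F : Finset (Site d)} (hUF : U ⊆ F) (hFT : Disjoint (↑F) T) (u δ : Site d → A) :
    condR μ (cyl U u) (cyl T δ) = ∑ ρ : F → Atom A with
      ∀ p ∈ U, measurableAtom (u p) = measurableAtom (repPattern ρ p),
      condR μ (cyl (↑F) (repPattern ρ)) (cyl T δ) := by
  simp only [condR, ENNReal.toReal_div]
  rw [measure_cyl_inter_cyl_eq_sum μ hUF hFT,
    ENNReal.toReal_sum fun _ _ => measure_ne_top μ _, Finset.sum_div]

theorem IsMRF.condR_cyl_eq {μ : Measure (Site d → A)} [IsFiniteMeasure μ] (hmrf : IsMRF μ)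
    {U W T : Set (Site d)} (hW : W.Finite) (hUW : U ⊆ W) (hT : T.Finite) (hWT : bd W ⊆ T)
    (hdisj : Disjoint W T) (u δ : Site d → A) (hpos : 0 < μ (cyl T δ)) :
    condR μ (cyl U u) (cyl T δ) = condR μ (cyl U u) (cyl (bd W) δ) := by
  lift W to Finset (Site d) using hW
  rw [condR_cyl_eq_sum μ hUW hdisj, condR_cyl_eq_sum μ hUW (disjoint_bd _)]
  exact Finset.sum_congr rfl fun ρ _ => hmrf _ W.finite_toSet _ T hT hWT hdisj δ hpos

theorem IsMRF.toReal_measure_cyl_inter_eq {μ : Measure (Site d → A)} [IsFiniteMeasure μ]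
    (hmrf : IsMRF μ) {U W T : Set (Site d)} (hW : W.Finite) (hUW : U ⊆ W) (hT : T.Finite)
    (hWT : Disjoint (W ∪ bd W) T) (u δ v : Site d → A) :
    (μ (cyl U u ∩ (cyl (bd W) δ ∩ cyl T v))).toReal =
      condR μ (cyl U u) (cyl (bd W) δ) * (μ (cyl (bd W) δ ∩ cyl T v)).toReal := by
  have hbdT : Disjoint (bd W) T := hWT.mono_left Set.subset_union_right
  rw [← condR_mul, ← cyl_union hbdT]
  rcases eq_or_ne (μ (cyl (bd W ∪ T) ((bd W).piecewise δ v))) 0 with h0 | h0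
  · simp [h0]
  rw [hmrf.condR_cyl_eq hW hUW (hW.bd.union hT) Set.subset_union_left
    (Set.disjoint_union_right.mpr ⟨disjoint_bd W, hWT.mono_left Set.subset_union_left⟩) u _
    (pos_iff_ne_zero.mpr h0)]
  rw [cyl_congr (S := bd W) (h := δ) fun p hp => Set.piecewise_eq_of_mem _ _ _ hp]

end Markov

section WeightedSums

variable {ι : Type*} {s : Finset ι}

theorem abs_sum_mul_le_mul_sum {a b : ι → ℝ} {K : ℝ} (hb : ∀ i ∈ s, 0 ≤ b i)
    (h : ∀ i ∈ s, 0 < b i → |a i| ≤ K) : |∑ i ∈ s, a i * b i| ≤ K * ∑ i ∈ s, b i := by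
  refine (Finset.abs_sum_le_sum_abs _ _).trans ?_
  rw [Finset.mul_sum]
  refine Finset.sum_le_sum fun i hi => ?_
  rw [abs_mul, abs_of_nonneg (hb i hi)]
  rcases (hb i hi).eq_or_lt with h0 | h0
  · simp [← h0]
  · exact mul_le_mul_of_nonneg_right (h i hi h0) h0.le

theorem abs_sum_mul_sub_mul_sum_le {c m b : ι → ℝ} {K : ℝ} (hm1 : ∑ i ∈ s, m i = 1)
    (hb : ∀ i ∈ s, 0 ≤ b i) (hbm : ∀ i ∈ s, b i ≤ m i)
    (hc : ∀ i ∈ s, ∀ j ∈ s, 0 < m i → 0 < m j → |c i - c j| ≤ K) :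
    |∑ i ∈ s, c i * b i - (∑ i ∈ s, c i * m i) * ∑ i ∈ s, b i| ≤ K * ∑ i ∈ s, b i := by
  have hm : ∀ i ∈ s, 0 ≤ m i := fun i hi => (hb i hi).trans (hbm i hi)
  have hmean : ∀ i ∈ s, 0 < m i → |c i - ∑ j ∈ s, c j * m j| ≤ K := by
    intro i hi hmi
    have : c i - ∑ j ∈ s, c j * m j = ∑ j ∈ s, (c i - c j) * m j := by
      simp only [sub_mul, Finset.sum_sub_distrib, ← Finset.mul_sum, hm1, mul_one]
    rw [this, ← mul_one K, ← hm1]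
    exact abs_sum_mul_le_mul_sum hm fun j hj hmj => hc i hi j hj hmi hmj
  have : ∑ i ∈ s, c i * b i - (∑ i ∈ s, c i * m i) * ∑ i ∈ s, b i =
      ∑ i ∈ s, (c i - ∑ j ∈ s, c j * m j) * b i := by
    simp only [sub_mul, Finset.sum_sub_distrib, ← Finset.mul_sum]
  rw [this]
  exact abs_sum_mul_le_mul_sum hb fun i hi hbi => hmean i hi (hbi.trans_le (hbm i hi))

end WeightedSums

section Mixing

open scoped Classical

variable {d : ℕ} {A : Type*} [MeasurableSpace A] [Fintype A]

theorem WSM.abs_measure_cyl_inter_sub_le {μ : Measure (Site d → A)} [IsProbabilityMeasure μ]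
    (hmrf : IsMRF μ) {f : ℕ → ℝ} (hwsm : WSM μ f) {U W T : Set (Site d)} (hW : W.Finite)
    (hUW : U ⊆ W) (hT : T.Finite) (hWT : Disjoint (W ∪ bd W) T) (u v : Site d → A) :
    |(μ (cyl U u ∩ cyl T v)).toReal - (μ (cyl U u)).toReal * (μ (cyl T v)).toReal| ≤
      U.ncard * f (setD U (bd W)) * (μ (cyl T v)).toReal := by
  have : Nonempty A := ⟨(nonempty_of_isProbabilityMeasure μ).some 0⟩
  have hbdT : Disjoint (bd W) T := hWT.mono_left Set.subset_union_right
  have hUT : Disjoint U T := hWT.mono_left (hUW.trans Set.subset_union_left)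
  obtain ⟨F, hF⟩ : ∃ F : Finset (Site d), ↑F = bd W := ⟨_, hW.bd.coe_toFinset⟩
  have hdecomp : ∀ (S : Set (Site d)) (δ : Site d → A), Disjoint (bd W) S →
      (μ (cyl S δ)).toReal =
        ∑ ρ : F → Atom A, (μ (cyl (bd W) (repPattern ρ) ∩ cyl S δ)).toReal := by
    intro S δ hS
    rw [measure_cyl_eq_sum μ (hF ▸ hS) δ, hF, ENNReal.toReal_sum fun _ _ => measure_ne_top μ _]
  set c := fun ρ : F → Atom A => condR μ (cyl U u) (cyl (bd W) (repPattern ρ))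
  set m := fun ρ : F → Atom A => (μ (cyl (bd W) (repPattern ρ))).toReal
  set b := fun ρ : F → Atom A => (μ (cyl (bd W) (repPattern ρ) ∩ cyl T v)).toReal
  have hUbd : Disjoint U (bd W) := (disjoint_bd W).mono_left hUW
  have hm1 : ∑ ρ, m ρ = 1 := by
    simpa [cyl_empty] using (hdecomp ∅ v (Set.disjoint_empty _)).symm
  have hα : (μ (cyl U u)).toReal = ∑ ρ, c ρ * m ρ := by
    rw [hdecomp U u hUbd.symm]
    exact Finset.sum_congr rfl fun ρ _ => by rw [Set.inter_comm, ← condR_mul]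
  have hβ : (μ (cyl T v)).toReal = ∑ ρ, b ρ := hdecomp T v hbdT
  have hG : (μ (cyl U u ∩ cyl T v)).toReal = ∑ ρ, c ρ * b ρ := by
    rw [← cyl_union hUT, hdecomp _ _ (Set.disjoint_union_right.mpr ⟨hUbd.symm, hbdT⟩)]
    refine Finset.sum_congr rfl fun ρ _ => ?_
    rw [cyl_union hUT, Set.inter_left_comm]
    exact hmrf.toReal_measure_cyl_inter_eq hW hUW hT hWT u _ v
  have hbm : ∀ ρ ∈ Finset.univ, b ρ ≤ m ρ := fun ρ _ =>
    ENNReal.toReal_mono (measure_ne_top μ _) (measure_mono Set.inter_subset_left)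
  have hc : ∀ ρ ∈ Finset.univ, ∀ ρ' ∈ Finset.univ, 0 < m ρ → 0 < m ρ' →
      |c ρ - c ρ'| ≤ U.ncard * f (setD U (bd W)) := fun ρ _ ρ' _ hρ hρ' =>
    hwsm W hW U hUW u _ _ (ENNReal.toReal_pos_iff.mp hρ).1 (ENNReal.toReal_pos_iff.mp hρ').1
  rw [hG, hα, hβ]
  exact abs_sum_mul_sub_mul_sum_le hm1 (fun _ _ => ENNReal.toReal_nonneg) hbm hc

end Mixing

theorem wsm_implies_strong_mixing_general {d : ℕ} {A : Type*} [Fintype A] [MeasurableSpace A]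
    (μ : Measure (Site d → A)) [IsProbabilityMeasure μ]
    (hinv : ShiftInvariant μ) (hmrf : IsMRF μ)
    (f : ℕ → ℝ)
    (hftend : Filter.Tendsto f Filter.atTop (nhds 0))
    (hwsm : WSM μ f) :
    ∀ U V : Set (Site d), U.Finite → V.Finite → Disjoint U V →
      ∀ (u v : Site d → A) (ε : ℝ), 0 < ε → ∃ N : ℕ, ∀ t : Site d, N ≤ dist1 t 0 →
        |(μ (cyl U u ∩ {x | ∀ q ∈ V, x (q + t) = v q})).toReal -
          (μ (cyl U u)).toReal * (μ (cyl V v)).toReal| < ε := by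
  intro U V hU hV _ u v ε hε
  rcases d.eq_zero_or_pos with rfl | hd
  · exact ⟨1, fun t ht => by simp [dist1] at ht⟩
  obtain ⟨R, hR⟩ : ∃ R, ∀ p ∈ U ∪ V, dist1 p 0 ≤ R :=
    ((hU.union hV).image (dist1 · 0)).bddAbove.imp fun _ hR p hp => hR ⟨p, hp, rfl⟩
  obtain ⟨M, hM⟩ : ∃ M, ∀ m ≥ M, U.ncard * f m < ε := Filter.eventually_atTop.mp <|
    (show Filter.Tendsto (fun m => U.ncard * f m) Filter.atTop (nhds 0) by
      simpa using hftend.const_mul (U.ncard : ℝ)).eventually (gt_mem_nhds hε)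
  refine ⟨M + R + R + 2, fun t ht => ?_⟩
  have hK : U.ncard * f (setD U (bd {p | dist1 p 0 ≤ M + R})) < ε := by
    rcases U.eq_empty_or_nonempty with rfl | hUne
    · simpa using hε
    exact hM _ <| le_setD hUne (bd_ball_nonempty hd _) fun p hp q hq =>
      le_dist1_of_mem_bd_ball (hR p (.inl hp)) hq
  rw [setOf_forall_add_eq_cyl, ← hinv.measure_cyl_image_add V v t]
  refine (WSM.abs_measure_cyl_inter_sub_le hmrf hwsm (finite_setOf_dist1_le 0 (M + R))
    (fun p hp => (hR p (.inl hp)).trans (Nat.le_add_left R M)) (hV.image _)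
    (disjoint_ball_union_bd_image_add (fun q hq => hR q (.inr hq)) ht) u _).trans_lt ?_
  have hβ1 : (μ (cyl ((· + t) '' V) fun p => v (p - t))).toReal ≤ 1 := measureReal_le_one
  rcases le_or_gt (U.ncard * f (setD U (bd {p | dist1 p 0 ≤ M + R}))) 0 with hK0 | hK0
  · exact (mul_nonpos_of_nonpos_of_nonneg hK0 ENNReal.toReal_nonneg).trans_lt hε
  · exact (mul_le_of_le_one_right hK0.le hβ1).trans_lt hK

/-- A shift-invariant MRF satisfying WSM (with some vanishing rate) is
measure-theoretically strong mixing: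
`μ([u] ∩ σ_{-p}([v])) → μ(u) μ(v)` as `‖p‖ → ∞`. -/
theorem wsm_implies_strong_mixing {d : ℕ} {A : Type*} [Fintype A] [MeasurableSpace A]
    (μ : Measure (Site d → A)) [IsProbabilityMeasure μ]
    (hinv : ShiftInvariant μ) (hmrf : IsMRF μ)
    (f : ℕ → ℝ) (hf0 : ∀ n, 0 ≤ f n)
    (hftend : Filter.Tendsto f Filter.atTop (nhds 0))
    (hwsm : WSM μ f) :
    ∀ U V : Set (Site d), U.Finite → V.Finite → Disjoint U V →
      ∀ (u v : Site d → A) (ε : ℝ), 0 < ε → ∃ N : ℕ, ∀ t : Site d, N ≤ dist1 t 0 →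
        |(μ (cyl U u ∩ {x | ∀ q ∈ V, x (q + t) = v q})).toReal -
          (μ (cyl U u)).toReal * (μ (cyl V v)).toReal| < ε :=
  wsm_implies_strong_mixing_general μ hinv hmrf f hftend hwsm
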